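/- arXiv:2503.23590 — 5 statements merged into one kernel-verified Lean document; each statement's English description precedes it below -/
import Mathlib

section
/- In the Weyl algebra over F_p with relation [∂, x] = ℏ, the element x^p ∂^p equals the product ∏_{i=0}^{p-1} (x∂ - iℏ), and hence also equals (x∂)^p - ℏ^{p-1}(x∂). -/
/-!
From `∂x = x∂ + ℏ` with `ℏ` commuting with `∂` one gets `∂ⁿ(x∂) = x∂ⁿ⁺¹ + nℏ∂ⁿ`, hence
`xⁿ∂ⁿ (x∂ - nℏ) = xⁿ⁺¹∂ⁿ⁺¹`, and `xᵖ∂ᵖ` is the product of the factors `x∂ - iℏ`.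

The elements `y = x∂` and `ℏ` commute, so the second identity is the image of
`∏_{i<p} (Y - iT) = Yᵖ - Tᵖ⁻¹Y` in `𝔽_p[T][Y]`. There the right-hand side is monic of
degree `p` in `Y` and, by Fermat's little theorem, vanishes at the `p` distinct points `Y = iT`.
-/

open Polynomial

theorem natCast_pow_char (p : ℕ) [Fact p.Prime] {R : Type*} [Ring R] [CharP R p] (n : ℕ) :
    (n : R) ^ p = n := by
  have := congrArg (ZMod.castHom dvd_rfl R) (ZMod.pow_card (n : ZMod p))
  rwa [map_pow, map_natCast] at this

theorem natCast_mul_injOn_range (p : ℕ) {R : Type*} [CommRing R] [IsDomain R] [CharP R p]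
    {t : R} (ht : t ≠ 0) : Set.InjOn (fun i : ℕ => (i : R) * t) (Finset.range p) := by
  intro i hi j hj hij
  have hcast : (i : R) = j := mul_right_cancel₀ ht hij
  rw [CharP.natCast_eq_natCast R p] at hcast
  exact Nat.ModEq.eq_of_lt_of_lt hcast (Finset.mem_range.1 hi) (Finset.mem_range.1 hj)

theorem prod_range_X_sub_C_natCast_mul (p : ℕ) [Fact p.Prime] {R : Type*} [CommRing R]
    [IsDomain R] [CharP R p] {t : R} (ht : t ≠ 0) :
    ∏ i ∈ Finset.range p, (X - C ((i : R) * t)) = X ^ p - C (t ^ (p - 1)) * X := by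
  have hp := (Fact.out : p.Prime)
  set P : R[X] := X ^ p - C (t ^ (p - 1)) * X
  set s : Multiset R := (Finset.range p).val.map fun i : ℕ => (i : R) * t
  have hs : (s.map fun a => X - C a).prod = ∏ i ∈ Finset.range p, (X - C ((i : R) * t)) := by
    rw [Multiset.map_map]
    exact Finset.prod_map_val _ _
  have hP : P.Monic := monic_X_pow_sub <| (degree_C_mul_X_le _).trans_lt <| by
    exact_mod_cast hp.one_lt
  have hroot (i : ℕ) : P.IsRoot ((i : R) * t) := by
    have ht_pow : t ^ p = t ^ (p - 1) * t := (pow_sub_one_mul hp.ne_zero t).symm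
    simp only [P, IsRoot, eval_sub, eval_pow, eval_X, eval_mul, eval_C, mul_pow,
      natCast_pow_char, ht_pow]
    ring
  have hs_le_roots : s ≤ P.roots := by
    rw [Multiset.le_iff_subset
      ((Finset.range p).nodup.map_on fun _ hi _ hj => natCast_mul_injOn_range p ht hi hj)]
    intro a ha
    obtain ⟨i, -, rfl⟩ := Multiset.mem_map.1 ha
    exact (mem_roots hP.ne_zero).2 (hroot i)
  rw [← hs]
  refine (eq_of_monic_of_dvd_of_natDegree_le
    (monic_multiset_prod_of_monic _ _ fun a _ => monic_X_sub_C a) hP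
    ((Multiset.prod_X_sub_C_dvd_iff_le_roots hP.ne_zero s).2 hs_le_roots) ?_).symm
  rw [natDegree_multiset_prod_X_sub_C_eq_card, Multiset.card_map, Finset.card_val,
    Finset.card_range]
  exact (natDegree_sub_le_of_le (natDegree_X_pow_le p)
    ((natDegree_C_mul_le _ _).trans natDegree_X_le)).trans (max_le le_rfl hp.one_lt.le)

theorem prod_range_sub_natCast_mul (p : ℕ) [Fact p.Prime] {R : Type*} [CommRing R] [CharP R p]
    (y h : R) : ∏ i ∈ Finset.range p, (y - i * h) = y ^ p - h ^ (p - 1) * y := by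
  have := congrArg (eval₂RingHom (eval₂RingHom (ZMod.castHom dvd_rfl R) h) y)
    (prod_range_X_sub_C_natCast_mul p (R := (ZMod p)[X]) X_ne_zero)
  simpa [eval₂_pow] using this

open scoped IsMulCommutative in
theorem Commute.list_prod_map_range_sub_natCast_mul (p : ℕ) [Fact p.Prime] {D : Type*} [Ring D]
    [CharP D p] {y h : D} (hyh : Commute y h) :
    ((List.range p).map fun i : ℕ => y - i * h).prod = y ^ p - h ^ (p - 1) * y := by
  set S := Subring.closure {y, h}
  have : IsMulCommutative S := Subring.isMulCommutative_closure <| by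
    rintro a (rfl | rfl) b (rfl | rfl) <;> first | rfl | exact hyh | exact hyh.symm
  have hy : y ∈ S := Subring.subset_closure (Set.mem_insert y _)
  have hh : h ∈ S := Subring.subset_closure (Set.mem_insert_of_mem y rfl)
  have := congrArg S.subtype (prod_range_sub_natCast_mul p (⟨y, hy⟩ : S) ⟨h, hh⟩)
  rw [Finset.prod, Finset.range_val, ← Multiset.coe_range, Multiset.map_coe, Multiset.prod_coe,
    map_list_prod, List.map_map] at this
  simpa [Function.comp_def] using this

section CanonicalCommutation

variable {D : Type*} [Ring D] {x d h : D}

theorem pow_mul_mul_eq_mul_pow_succ_add_nsmul (rel : d * x = x * d + h) (hhd : Commute h d)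
    (n : ℕ) :
    d ^ n * (x * d) = x * d ^ (n + 1) + n • (h * d ^ n) := by
  induction n with
  | zero => simp
  | succ n ih =>
    calc d ^ (n + 1) * (x * d) = d * (d ^ n * (x * d)) := by rw [pow_succ', mul_assoc]
      _ = (d * x) * d ^ (n + 1) + n • (h * (d * d ^ n)) := by
        rw [ih, mul_add, mul_smul_comm, ← mul_assoc d h, ← hhd.eq, mul_assoc, mul_assoc]
      _ = x * d ^ (n + 1 + 1) + (n + 1) • (h * d ^ (n + 1)) := by
        rw [rel, ← pow_succ', pow_succ' d (n + 1), succ_nsmul]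
        noncomm_ring

theorem pow_mul_pow_mul_sub_natCast_mul (rel : d * x = x * d + h) (hhd : Commute h d) (n : ℕ) :
    x ^ n * d ^ n * (x * d - n * h) = x ^ (n + 1) * d ^ (n + 1) := by
  calc x ^ n * d ^ n * (x * d - n * h)
      = x ^ n * (d ^ n * (x * d)) - n • (x ^ n * (h * d ^ n)) := by
        rw [(hhd.pow_right n).eq, ← nsmul_eq_mul, mul_sub, mul_smul_comm, mul_assoc, mul_assoc]
    _ = x ^ (n + 1) * d ^ (n + 1) := by
        rw [pow_mul_mul_eq_mul_pow_succ_add_nsmul rel hhd, pow_succ]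
        noncomm_ring

theorem pow_mul_pow_eq_list_prod (rel : d * x = x * d + h) (hhd : Commute h d) (n : ℕ) :
    x ^ n * d ^ n = ((List.range n).map fun i : ℕ => x * d - i * h).prod := by
  induction n with
  | zero => simp
  | succ n ih => rw [List.prod_range_succ, ← ih, pow_mul_pow_mul_sub_natCast_mul rel hhd]

end CanonicalCommutation

/-- In the Weyl algebra over `F_p` with relation `[∂, x] = ℏ`, the element
`x^p ∂^p` equals `∏_{i=0}^{p-1} (x∂ - iℏ)`, and hence also equals
`(x∂)^p - ℏ^{p-1}(x∂)`. -/
theorem stmt0 (p : ℕ) (hp : p.Prime) {D : Type*} [Ring D] [CharP D p]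
    (x d h : D) (rel : d * x - x * d = h)
    (hhx : Commute h x) (hhd : Commute h d) :
    x ^ p * d ^ p = ((List.range p).map (fun (i : ℕ) => x * d - (i : D) * h)).prod ∧
    ((List.range p).map (fun (i : ℕ) => x * d - (i : D) * h)).prod
      = (x * d) ^ p - h ^ (p - 1) * (x * d) := by
  have : Fact p.Prime := ⟨hp⟩
  exact ⟨pow_mul_pow_eq_list_prod (eq_add_of_sub_eq' rel) hhd p,
    (hhx.mul_right hhd).symm.list_prod_map_range_sub_natCast_mul p⟩
end

section
/- In the Weyl algebra over F_p with relation [∂, x] = ℏ, the element (x∂)^p - ℏ^{p-1}(x∂) is central. -/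
/-- In the Weyl algebra over `F_p` with relation `[∂, x] = ℏ`, the element
`(x∂)^p - ℏ^{p-1}(x∂)` is central: it commutes with `x`, `∂` and `ℏ`. -/
theorem stmt1 (p : ℕ) (hp : p.Prime) {D : Type*} [Ring D] [CharP D p]
    (x d h : D) (rel : d * x - x * d = h)
    (hhx : Commute h x) (hhd : Commute h d) :
    Commute ((x * d) ^ p - h ^ (p - 1) * (x * d)) x ∧
    Commute ((x * d) ^ p - h ^ (p - 1) * (x * d)) d ∧
    Commute ((x * d) ^ p - h ^ (p - 1) * (x * d)) h := by
  haveI : Fact p.Prime := ⟨hp⟩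
  set e := x * d with he
  have hdx : d * x = x * d + h := by
    have := sub_eq_iff_eq_add.mp rel
    rw [this]; abel
  have hEh : Commute e h := hhx.mul_right hhd |>.symm
  have hp1 : h ^ (p - 1) * h = h ^ p := by
    rw [← pow_succ, Nat.sub_add_cancel hp.one_lt.le]
  -- semiconjugation relations
  have s1 : SemiconjBy x (e + h) e := by
    show x * (e + h) = e * x
    rw [he, mul_assoc, hdx, mul_add]
  have s2 : SemiconjBy d (e - h) e := by
    show d * (e - h) = e * d
    rw [he, mul_sub, ← mul_assoc, hdx, add_mul, hhd.eq]
    abel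
  -- commute with x
  have cx : SemiconjBy x ((e + h) ^ p - h ^ (p - 1) * (e + h)) (e ^ p - h ^ (p - 1) * e) :=
    (s1.pow_right p).sub_right (SemiconjBy.mul_right ((hhx.symm).pow_right (p - 1)) s1)
  have cd : SemiconjBy d ((e - h) ^ p - h ^ (p - 1) * (e - h)) (e ^ p - h ^ (p - 1) * e) :=
    (s2.pow_right p).sub_right (SemiconjBy.mul_right ((hhd.symm).pow_right (p - 1)) s2)
  have ex : (e + h) ^ p - h ^ (p - 1) * (e + h) = e ^ p - h ^ (p - 1) * e := by
    rw [add_pow_char_of_commute (x := e) (y := h) (p := p) hEh, mul_add, hp1]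
    abel
  have ed : (e - h) ^ p - h ^ (p - 1) * (e - h) = e ^ p - h ^ (p - 1) * e := by
    rw [sub_pow_char_of_commute (x := e) (y := h) (p := p) hEh, mul_sub, hp1]
    abel
  rw [ex] at cx
  rw [ed] at cd
  refine ⟨cx.symm, cd.symm, ?_⟩
  exact (hEh.pow_left p).sub_left (Commute.mul_left ((Commute.refl h).pow_left (p - 1)) hEh)
end

section
/- In the Weyl algebra over F_p with relation [∂, x] = ℏ, the elements x^p and ∂^p are central. -/
lemma weyl_aux {D : Type*} [Ring D] (x d h : D) (rel : d * x = x * d + h)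
    (hhx : Commute h x) :
    ∀ n : ℕ, d * x ^ (n + 1) = x ^ (n + 1) * d + (n + 1 : ℕ) * (x ^ n * h) := by
  intro n
  induction n with
  | zero => simpa using rel
  | succ n ih =>
    have hx : h * x ^ (n + 1) = x ^ (n + 1) * h := ((hhx.pow_right (n + 1)).eq)
    calc d * x ^ (n + 2) = (d * x ^ (n + 1)) * x := by rw [pow_succ, mul_assoc]
    _ = x ^ (n + 1) * (d * x) + (n + 1 : ℕ) * (x ^ n * (h * x)) := by
        rw [ih]; push_cast; noncomm_ring
    _ = x ^ (n + 2) * d + x ^ (n + 1) * h + (n + 1 : ℕ) * (x ^ (n + 1) * h) := by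
        rw [rel, hhx.eq, pow_succ, pow_succ]; push_cast; noncomm_ring
    _ = x ^ (n + 2) * d + (n + 2 : ℕ) * (x ^ (n + 1) * h) := by push_cast; noncomm_ring

/-- In the Weyl algebra over `F_p` with relation `[∂, x] = ℏ`, the elements
`x^p` and `∂^p` are central: they commute with `x`, `∂` and `ℏ`. -/
theorem stmt2 (p : ℕ) (hp : p.Prime) {D : Type*} [Ring D] [CharP D p]
    (x d h : D) (rel : d * x - x * d = h)
    (hhx : Commute h x) (hhd : Commute h d) :
    (Commute (x ^ p) x ∧ Commute (x ^ p) d ∧ Commute (x ^ p) h) ∧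
    (Commute (d ^ p) x ∧ Commute (d ^ p) d ∧ Commute (d ^ p) h) := by
  obtain ⟨k, rfl⟩ : ∃ k, p = k + 1 := ⟨p - 1, (Nat.succ_pred_eq_of_pos hp.pos).symm⟩
  have hp0 : ((k + 1 : ℕ) : D) = 0 := CharP.cast_eq_zero D (k + 1)
  have rel1 : d * x = x * d + h := by rw [← rel]; noncomm_ring
  have rel2 : x * d = d * x + (-h) := by rw [← rel]; noncomm_ring
  have h1 : d * x ^ (k + 1) = x ^ (k + 1) * d := by
    rw [weyl_aux x d h rel1 hhx, hp0]; noncomm_ring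
  have h2 : x * d ^ (k + 1) = d ^ (k + 1) * x := by
    rw [weyl_aux d x (-h) rel2 hhd.neg_left, hp0]; noncomm_ring
  exact ⟨⟨Commute.refl x |>.pow_left _, h1.symm, (hhx.pow_right _).symm⟩,
    ⟨h2.symm, Commute.refl d |>.pow_left _, (hhd.pow_right _).symm⟩⟩
end

section
/- Let A be a flat k[ℏ]-algebra over a field k of characteristic p with [A, A] ⊆ ℏA and no ℏ-torsion, equipped with a Frobenius-linear map (-)^{[p]} : A → A. If the Artin–Schreier map s(x) = x^p - ℏ^{p-1} x^{[p]} is central (i.e., s(x)y = ys(x) for all x, y ∈ A), then ℏ^p (ad x)^p(y) = ℏ^p {x^{[p]}, y} for all x, y, where {u, v} is defined by ℏ{u, v} = uv - vu; hence by ℏ-torsion-freeness (ad x)^p(y) = {x^{[p]}, y}. -/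
/-- Let `A` be a flat `k[ℏ]`-algebra over a field `k` of characteristic `p`
with `[A, A] ⊆ ℏA`, no `ℏ`-torsion, and a Frobenius-linear map `(-)^{[p]}`.
If the Artin–Schreier map `s(x) = x^p - ℏ^{p-1} x^{[p]}` is central, then
`ℏ^p (ad x)^p(y) = ℏ^p {x^{[p]}, y}` for all `x, y`, and hence
`(ad x)^p(y) = {x^{[p]}, y}`. -/
theorem stmt6 (p : ℕ) [Fact p.Prime] {k : Type*} [Field k] [CharP k p]
    {A : Type*} [Ring A] [Algebra k A]
    (h : A) (hcentral : ∀ a : A, Commute h a)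
    (htf : ∀ a : A, h * a = 0 → a = 0)
    (br : A → A → A) (hbr : ∀ x y : A, h * br x y = x * y - y * x)
    (pw : A → A) (hpw : ∀ (c : k) (x : A), pw (c • x) = (c ^ p) • pw x)
    (hcen : ∀ x y : A,
      (x ^ p - h ^ (p - 1) * pw x) * y = y * (x ^ p - h ^ (p - 1) * pw x)) :
    ∀ x y : A,
      h ^ p * ((br x)^[p] y) = h ^ p * br (pw x) y ∧
      (br x)^[p] y = br (pw x) y := by
  intro x y
  -- trivial case: A subsingleton
  by_cases hs : Subsingleton A
  · exact ⟨Subsingleton.elim _ _, Subsingleton.elim _ _⟩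
  have : Nontrivial A := not_subsingleton_iff_nontrivial.mp hs
  haveI : CharP A p := charP_of_injective_algebraMap (algebraMap k A).injective p
  haveI : CharP (Module.End k A) p := by
    constructor
    intro n
    rw [← CharP.cast_eq_zero_iff A p n]
    constructor
    · intro hn
      have := congrArg (fun f : Module.End k A => f 1) hn
      simpa [Module.End.natCast_apply, nsmul_eq_mul] using this
    · intro hn
      ext a
      simp [Module.End.natCast_apply, nsmul_eq_mul, hn]
  have hp : 0 < p := (Fact.out : p.Prime).pos
  -- the commutator map as a linear endomorphism
  set L := LinearMap.mulLeft k x with hL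
  set R := LinearMap.mulRight k x with hR
  have hcomm : Commute L R := by
    ext a
    simp [hL, hR, mul_assoc]
  have hpow : (L - R) ^ p = LinearMap.mulLeft k (x ^ p) - LinearMap.mulRight k (x ^ p) := by
    rw [sub_pow_char_of_commute p hcomm, LinearMap.pow_mulLeft, LinearMap.pow_mulRight]
  -- iterating g = [x, ·]
  set g : A → A := fun w => x * w - w * x with hg
  have hgit : ∀ n z, g^[n] z = ((L - R) ^ n) z := by
    intro n
    induction n with
    | zero => intro z; simp
    | succ n ih =>
      intro z
      rw [Function.iterate_succ_apply', ih, pow_succ']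
      simp [hg, hL, hR, Module.End.mul_apply]
  -- key induction: h^n * (br x)^[n] z = g^[n] z
  have key : ∀ n z, h ^ n * ((br x)^[n] z) = g^[n] z := by
    intro n
    induction n with
    | zero => intro z; simp
    | succ n ih =>
      intro z
      rw [Function.iterate_succ_apply', Function.iterate_succ_apply']
      have hmove : ∀ m w, h ^ m * g w = g (h ^ m * w) := by
        intro m w
        simp only [hg, mul_sub]
        rw [← mul_assoc, ((hcentral x).pow_left m).eq, mul_assoc, ← mul_assoc (h ^ m) w x]
      calc h ^ (n + 1) * br x ((br x)^[n] z)
          = h ^ n * (h * br x ((br x)^[n] z)) := by rw [pow_succ, mul_assoc]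
        _ = h ^ n * g ((br x)^[n] z) := by rw [hbr]
        _ = g (h ^ n * (br x)^[n] z) := hmove n _
        _ = g (g^[n] z) := by rw [ih]
  -- first part
  have hps : p - 1 + 1 = p := Nat.succ_pred_eq_of_pos hp
  have main : h ^ p * ((br x)^[p] y) = h ^ p * br (pw x) y := by
    rw [key p y, hgit p y, hpow]
    have hcen' := hcen x y
    have h1 : x ^ p * y - h ^ (p - 1) * pw x * y
        = y * x ^ p - y * (h ^ (p - 1) * pw x) := by
      rw [← sub_mul, ← mul_sub]; exact hcen x y
    have : x ^ p * y - y * x ^ p = h ^ (p - 1) * pw x * y - y * (h ^ (p - 1) * pw x) :=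
      sub_eq_sub_iff_sub_eq_sub.mp h1
    simp only [LinearMap.sub_apply, LinearMap.mulLeft_apply, LinearMap.mulRight_apply]
    rw [this]
    have hslide : y * (h ^ (p - 1) * pw x) = h ^ (p - 1) * (y * pw x) := by
      rw [← mul_assoc, ← ((hcentral y).pow_left (p - 1)).eq, mul_assoc]
    rw [hslide, mul_assoc, ← mul_sub, ← hbr, ← mul_assoc, ← pow_succ, hps]
  refine ⟨main, ?_⟩
  -- cancel h^p using torsion-freeness
  have cancel : ∀ (n : ℕ) (a : A), h ^ n * a = 0 → a = 0 := by
    intro n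
    induction n with
    | zero => intro a ha; simpa using ha
    | succ n ih =>
      intro a ha
      rw [pow_succ', mul_assoc] at ha
      exact ih a (htf _ ha)
  have := cancel p (((br x)^[p] y) - br (pw x) y) (by rw [mul_sub, main, sub_self])
  exact sub_eq_zero.mp this
end

section
/- In the one-variable Weyl algebra over F_p with [∂,x] = ℏ, the images of the canonical Frobenius splitting on the generators satisfy the compatibility Λ(x)Λ(y) = x^p ∂^p = (x∂)^p - ℏ^{p-1}(x∂), where Λ(x) = x^p, Λ(y) = ∂^p; i.e., the Frobenius splitting of the weight-zero function xy is the Artin–Schreier expression in x∂. -/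
open Polynomial

private lemma list_range_map_prod {M : Type*} [CommMonoid M] (f : ℕ → M) (n : ℕ) :
    ((List.range n).map f).prod = ∏ i ∈ Finset.range n, f i := by
  induction n with
  | zero => simp
  | succ n ih =>
      rw [List.range_succ, List.map_append, List.prod_append, Finset.prod_range_succ, ih]
      simp

/-- Factorization `X^p - X = ∏ (X - a)` over `ZMod p`. -/
private lemma zmod_prod_X_sub_C (p : ℕ) [Fact p.Prime] [NeZero p] :
    ∏ a : ZMod p, (X - C a) = (X ^ p - X : (ZMod p)[X]) := by
  have hp : p.Prime := Fact.out
  have hq : Fintype.card (ZMod p) = p := ZMod.card p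
  have hmonic : (X ^ p - X : (ZMod p)[X]).Monic := by
    apply monic_X_pow_sub
    rw [degree_X]
    exact_mod_cast hp.one_lt
  have hdeg : (X ^ p - X : (ZMod p)[X]).natDegree = p :=
    FiniteField.X_pow_card_sub_X_natDegree_eq (ZMod p) hp.one_lt
  have hroots : (X ^ p - X : (ZMod p)[X]).roots = Finset.univ.val := by
    have := FiniteField.roots_X_pow_card_sub_X (ZMod p)
    rwa [hq] at this
  have hcard : Multiset.card (X ^ p - X : (ZMod p)[X]).roots
      = (X ^ p - X : (ZMod p)[X]).natDegree := by
    rw [hroots, hdeg, ← Finset.card_def, Finset.card_univ, hq]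
  have hfac := prod_multiset_X_sub_C_of_monic_of_roots_card_eq hmonic hcard
  rw [hroots] at hfac
  rw [Finset.prod_eq_multiset_prod]
  exact hfac

/-- Homogenized factorization over the rational function field. -/
private lemma ratfunc_prod (p : ℕ) [Fact p.Prime] [NeZero p] :
    ∏ c : ZMod p,
        ((X : (RatFunc (ZMod p))[X]) - C (algebraMap (ZMod p) (RatFunc (ZMod p)) c * RatFunc.X))
      = X ^ p - C (RatFunc.X ^ (p - 1)) * X := by
  have hp : p.Prime := Fact.out
  set K := RatFunc (ZMod p)
  set t : K := RatFunc.X with ht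
  have htne : t ≠ 0 := RatFunc.X_ne_zero
  have base := congrArg (aeval (R := ZMod p) ((C t⁻¹ * X : K[X]))) (zmod_prod_X_sub_C p)
  simp only [map_prod, map_sub, map_pow, aeval_X, aeval_C, Polynomial.algebraMap_apply] at base
  have key := congrArg (fun q : K[X] => C (t ^ p) * q) base
  have hcount : (Finset.univ : Finset (ZMod p)).card = p := by
    rw [Finset.card_univ, ZMod.card]
  calc
    ∏ c : ZMod p, ((X : K[X]) - C (algebraMap (ZMod p) K c * t))
        = ∏ c : ZMod p, (C t * (C t⁻¹ * X - C (algebraMap (ZMod p) K c))) := by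
          refine Finset.prod_congr rfl fun c _ => ?_
          rw [mul_sub, ← mul_assoc, ← C_mul, mul_inv_cancel₀ htne, C_1, one_mul, ← C_mul,
            mul_comm t]
    _ = C (t ^ p) * ∏ c : ZMod p, (C t⁻¹ * X - C (algebraMap (ZMod p) K c)) := by
          rw [Finset.prod_mul_distrib, Finset.prod_const, hcount, ← C_pow]
    _ = C (t ^ p) * ((C t⁻¹ * X) ^ p - C t⁻¹ * X) := key
    _ = X ^ p - C (t ^ (p - 1)) * X := by
          have h1 : t ^ p * t⁻¹ ^ p = 1 := by
            rw [← mul_pow, mul_inv_cancel₀ htne, one_pow]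
          have hsplit : t ^ p = t ^ (p - 1) * t := by
            rw [← pow_succ, Nat.sub_add_cancel hp.one_le]
          have h2 : t ^ p * t⁻¹ = t ^ (p - 1) := by
            rw [hsplit, mul_assoc, mul_inv_cancel₀ htne, mul_one]
          have expand : C (t ^ p) * ((C t⁻¹ * X) ^ p - C t⁻¹ * X)
              = C (t ^ p * t⁻¹ ^ p) * X ^ p - C (t ^ p * t⁻¹) * X := by
            simp only [C_mul, C_pow]; ring
          rw [expand, h1, h2, C_1, one_mul]

/-- The key commutative polynomial identity `∏_{i<p} (X - i·Y) = X^p - Y^{p-1}·X`. -/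
private lemma poly_identity (p : ℕ) [Fact p.Prime] [NeZero p] :
    ∏ i ∈ Finset.range p, ((X : ((ZMod p)[X])[X]) - i • C X)
      = X ^ p - C ((X : (ZMod p)[X]) ^ (p - 1)) * X := by
  set K := RatFunc (ZMod p)
  set ρ : (ZMod p)[X] →+* K := (algebraMap (ZMod p)[X] K : (ZMod p)[X] →+* K) with hρdef
  have hρ : Function.Injective ρ := RatFunc.algebraMap_injective (ZMod p)
  have hμ : Function.Injective (Polynomial.mapRingHom ρ) := by
    intro a b hab
    exact Polynomial.map_injective ρ hρ hab
  apply hμ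
  have hX : ρ Polynomial.X = RatFunc.X := RatFunc.algebraMap_X
  have μfactor : ∀ i : ℕ,
      (Polynomial.mapRingHom ρ) ((X : ((ZMod p)[X])[X]) - i • C X)
        = (X : K[X]) - C (algebraMap (ZMod p) K ((i : ℕ) : ZMod p) * RatFunc.X) := by
    intro i
    rw [map_sub, map_nsmul]
    rw [Polynomial.coe_mapRingHom, Polynomial.map_X, Polynomial.map_C, hX]
    have e1 : (i • C RatFunc.X : K[X]) = C (((i : ℕ) : K) * RatFunc.X) := by
      rw [nsmul_eq_mul, ← C_eq_natCast, ← C_mul]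
    rw [e1, map_natCast (algebraMap (ZMod p) K)]
  rw [map_prod, map_sub, map_pow, map_mul]
  have μC : (Polynomial.mapRingHom ρ) (C ((X : (ZMod p)[X]) ^ (p - 1)))
      = C (RatFunc.X ^ (p - 1)) := by
    rw [Polynomial.coe_mapRingHom, Polynomial.map_C, map_pow, hX]
  have μX : (Polynomial.mapRingHom ρ) (X : ((ZMod p)[X])[X]) = X := by
    rw [Polynomial.coe_mapRingHom, Polynomial.map_X]
  rw [μC, μX, Finset.prod_congr rfl fun i _ => μfactor i]
  have reindex :
      ∏ i ∈ Finset.range p,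
          ((X : K[X]) - C (algebraMap (ZMod p) K ((i : ℕ) : ZMod p) * RatFunc.X))
        = ∏ c : ZMod p, ((X : K[X]) - C (algebraMap (ZMod p) K c * RatFunc.X)) := by
    refine Finset.prod_nbij' (fun i => ((i : ℕ) : ZMod p)) (fun c => c.val)
      (fun a _ => Finset.mem_univ _) (fun c _ => Finset.mem_range.2 (ZMod.val_lt c))
      (fun a ha => ZMod.val_cast_of_lt (Finset.mem_range.1 ha))
      (fun c _ => ZMod.natCast_rightInverse c) (fun a _ => rfl)
  rw [reindex, ratfunc_prod p]

/-- In the one-variable Weyl algebra over `F_p` with `[∂, x] = ℏ`, the images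
of the canonical Frobenius splitting on the generators satisfy
`Λ(x)Λ(y) = x^p ∂^p = (x∂)^p - ℏ^{p-1}(x∂)`. -/
theorem stmt15 (p : ℕ) (hp : p.Prime) {D : Type*} [Ring D] [CharP D p]
    (x d h : D) (rel : d * x - x * d = h)
    (hhx : Commute h x) (hhd : Commute h d) :
    x ^ p * d ^ p = (x * d) ^ p - h ^ (p - 1) * (x * d) := by
  haveI : Fact p.Prime := ⟨hp⟩
  haveI : NeZero p := ⟨hp.pos.ne'⟩
  have hdx : d * x = x * d + h := by rw [← rel]; abel
  have hdxd : (x * d) * d = d * (x * d) - h * d := by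
    have : d * (x * d) = (x * d) * d + h * d := by
      rw [← mul_assoc, hdx, add_mul]
    rw [this]; abel
  -- commutation of x*d past powers of d
  have Edpow : ∀ k : ℕ, (x * d) * d ^ k = d ^ k * (x * d - k • h) := by
    intro k
    induction k with
    | zero => simp
    | succ k ih =>
        rw [pow_succ, ← mul_assoc, ih, mul_assoc, mul_assoc]
        congr 1
        rw [sub_mul, smul_mul_assoc, mul_sub, hdxd, hhd.eq, succ_nsmul, mul_add,
          mul_smul_comm]
        abel
  -- normal ordering as a product of linear factors
  have prodform : ∀ k : ℕ,
      x ^ k * d ^ k = ((List.range k).map (fun i => x * d - i • h)).prod := by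
    intro k
    induction k with
    | zero => simp
    | succ k ih =>
        rw [pow_succ, pow_succ', mul_assoc, ← mul_assoc x d (d ^ k), Edpow k, ← mul_assoc,
          ih, List.range_succ, List.map_append, List.prod_append]
        simp
  -- the evaluation homomorphism from the two-variable polynomial ring
  let f0 : ZMod p →+* D := ZMod.castHom dvd_rfl D
  have hc : ∀ (a : ZMod p) (y : D), Commute (f0 a) y := by
    intro a y
    obtain ⟨n, rfl⟩ := (ZMod.natCast_rightInverse (n := p)).surjective a
    rw [map_natCast]
    exact Nat.cast_commute n y
  let f1 : (ZMod p)[X] →+* D := eval₂RingHom' f0 h (fun a => hc a h)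
  have f1mon : ∀ (n : ℕ) (c : ZMod p), f1 (monomial n c) = f0 c * h ^ n := fun n c =>
    eval₂_monomial f0 h
  have hcomm1 : ∀ a : (ZMod p)[X], Commute (f1 a) (x * d) := by
    intro a
    induction a using Polynomial.induction_on' with
    | add f g hf hg => rw [map_add]; exact hf.add_left hg
    | monomial n c =>
        rw [f1mon]
        exact (hc c (x * d)).mul_left ((hhx.mul_right hhd).pow_left n)
  let f2 : ((ZMod p)[X])[X] →+* D := eval₂RingHom' f1 (x * d) hcomm1
  have f2X : f2 X = x * d := eval₂_X f1 (x * d)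
  have f2CX : f2 (C X) = h := by
    have : f2 (C X) = f1 X := eval₂_C f1 (x * d)
    rw [this]
    exact eval₂_X f0 h
  have factor : ∀ i : ℕ, f2 ((X : ((ZMod p)[X])[X]) - i • C X) = x * d - i • h := by
    intro i
    rw [map_sub, map_nsmul, f2X, f2CX]
  calc x ^ p * d ^ p
      = ((List.range p).map (fun i => x * d - i • h)).prod := prodform p
    _ = ((List.range p).map (fun i => f2 ((X : ((ZMod p)[X])[X]) - i • C X))).prod := by
        congr 1
        exact List.map_congr_left fun i _ => (factor i).symm
    _ = f2 (((List.range p).map (fun i => (X : ((ZMod p)[X])[X]) - i • C X)).prod) := by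
        rw [map_list_prod, List.map_map]
        rfl
    _ = f2 ((X : ((ZMod p)[X])[X]) ^ p - C ((X : (ZMod p)[X]) ^ (p - 1)) * X) := by
        rw [list_range_map_prod, poly_identity p]
    _ = (x * d) ^ p - h ^ (p - 1) * (x * d) := by
        rw [map_sub, map_pow, map_mul, f2X, C_pow, map_pow, f2CX]
end
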